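/- Fix k ∈ {1,...,K} and t ≥ 0, and define h_k^{(t)} := (1/M) Σ_{i=1}^{M} (H_i(x_{i,k}^{(t)}) − H_i(x̄_k^{(t)})), where H_i(x̄_k^{(t)}) is the local Sanger direction evaluated with k-th argument x̄_k^{(t)} and the same local vectors x_{i,p}^{(t)}, p < k. Suppose ‖x_{i,p}^{(t)}‖² ≤ 3 for every node i and every p ≤ k, ‖x̄_k^{(t)}‖² ≤ 3, and ‖x_{i,k}^{(t)} − x̄_k^{(t)}‖ ≤ b_k(β^t + α/(1−β)) for every node i, for some constant b_k > 0. Then ‖h_k^{(t)}‖ ≤ 3(k+2) λ_1 b_k (β^t + α/(1−β)). -/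

import Mathlib

/-!
Write `T` for a local covariance operator and `e = x − v`. Because `T` is symmetric, the Sanger
direction `H(u) = T u − ⟪u, T u⟫ u − Σₚ ⟪yₚ, T u⟫ yₚ` satisfies
`H(x) − H(v) = (T e − ⟪x, T x⟫ e) − ⟪e, T (x + v)⟫ v − Σₚ ⟪yₚ, T e⟫ yₚ`.
The spectrum of `T` lies in `[0, λ₁]`, i.e. `‖T − λ₁/2‖ ≤ λ₁/2`; this gives `‖T‖ ≤ λ₁`,
`0 ≤ ⟪x, T x⟫ ≤ 3λ₁` and `‖T − c‖ ≤ 3λ₁` for `c ∈ [0, 3λ₁]`. With all squared norms at most `3`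
the three terms are at most `3λ₁‖e‖`, `6λ₁‖e‖` and `(k − 1)·3λ₁‖e‖`, so every node contributes
at most `3(k + 2)λ₁‖e‖`, and so does the network average.
-/

open Matrix Finset

/-- Coerce a plain vector into `EuclideanSpace` (they are definitionally equal). -/
def toE {d : ℕ} (v : Fin d → ℝ) : EuclideanSpace ℝ (Fin d) := WithLp.toLp 2 v

/-- The local Sanger direction with `k`-th argument `u` and fixed lower-order vectors
`y 1, …, y (k−1)`:
`H(u) = C u − (uᵀ C u) u − Σ_{p=1}^{k−1} (y_pᵀ C u) y_p`. -/
noncomputable def sangerAt {d : ℕ} (C : Matrix (Fin d) (Fin d) ℝ)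
    (y : ℕ → EuclideanSpace ℝ (Fin d)) (k : ℕ) (u : EuclideanSpace ℝ (Fin d)) :
    EuclideanSpace ℝ (Fin d) :=
  toE (C.mulVec u) - (u ⬝ᵥ C.mulVec u) • u
    - ∑ p ∈ Finset.Icc 1 (k - 1), ((y p) ⬝ᵥ C.mulVec u) • y p

open scoped RealInnerProductSpace

section Spectral

variable {𝕜 E : Type*} [RCLike 𝕜] [NormedAddCommGroup E] [InnerProductSpace 𝕜 E]
  [FiniteDimensional 𝕜 E]

theorem LinearMap.IsSymmetric.norm_apply_sub_smul_le {T : E →ₗ[𝕜] E} (hT : T.IsSymmetric)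
    {n : ℕ} (hn : Module.finrank 𝕜 E = n) {m r : ℝ} (hr : 0 ≤ r)
    (h : ∀ i, |hT.eigenvalues hn i - m| ≤ r) (z : E) :
    ‖T z - (m : 𝕜) • z‖ ≤ r * ‖z‖ := by
  set b := hT.eigenvectorBasis hn
  have hcoord : ∀ i, b.repr (T z - (m : 𝕜) • z) i =
      ((hT.eigenvalues hn i - m : ℝ) : 𝕜) * b.repr z i := fun i => by
    simp [b, hT.eigenvectorBasis_apply_self_apply, sub_mul, RCLike.real_smul_eq_coe_mul]
  rw [← b.repr.norm_map, ← b.repr.norm_map z]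
  refine le_of_pow_le_pow_left₀ two_ne_zero (by positivity) ?_
  rw [mul_pow, EuclideanSpace.norm_sq_eq, EuclideanSpace.norm_sq_eq, Finset.mul_sum]
  gcongr with i
  rw [hcoord, norm_mul, mul_pow, RCLike.norm_ofReal]
  gcongr
  exact h i

theorem LinearMap.IsPositive.norm_apply_sub_half_smul_le {T : E →ₗ[𝕜] E} (hT : T.IsPositive)
    {L : ℝ} (hL : 0 ≤ L) (h : ∀ μ : ℝ, Module.End.HasEigenvalue T (μ : 𝕜) → μ ≤ L) (z : E) :
    ‖T z - ((L / 2 : ℝ) : 𝕜) • z‖ ≤ L / 2 * ‖z‖ := by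
  refine hT.isSymmetric.norm_apply_sub_smul_le rfl (by positivity) (fun i => ?_) z
  have h0 := hT.nonneg_eigenvalues rfl i
  have h1 := h _ (hT.isSymmetric.hasEigenvalue_eigenvalues rfl i)
  rw [abs_le]
  constructor <;> linarith

end Spectral

theorem norm_inv_card_smul_sum_le {ι F : Type*} [Fintype ι] [Nonempty ι]
    [SeminormedAddCommGroup F] [NormedSpace ℝ F] {f : ι → F} {B : ℝ} (h : ∀ i, ‖f i‖ ≤ B) :
    ‖(Fintype.card ι : ℝ)⁻¹ • ∑ i, f i‖ ≤ B := by
  have hcard : (0 : ℝ) < Fintype.card ι := by exact_mod_cast Fintype.card_pos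
  rw [norm_smul, norm_inv, Real.norm_natCast, inv_mul_le_iff₀ hcard]
  simpa using norm_sum_le_of_le univ fun i _ => h i

section Sanger

variable {E ι : Type*} [NormedAddCommGroup E] [InnerProductSpace ℝ E] {T : E →ₗ[ℝ] E} {L : ℝ}

theorem norm_apply_le_of_norm_sub_half_smul_le
    (hTL : ∀ z, ‖T z - (L / 2) • z‖ ≤ L / 2 * ‖z‖) (z : E) : ‖T z‖ ≤ L * ‖z‖ :=
  calc ‖T z‖ ≤ ‖T z - (L / 2) • z‖ + ‖(L / 2) • z‖ := norm_le_norm_sub_add _ _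
    _ ≤ L / 2 * ‖z‖ + L / 2 * ‖z‖ := by
      gcongr
      · exact hTL z
      · rw [norm_smul, Real.norm_eq_abs, ← abs_norm z, ← abs_mul, abs_norm]
        exact (abs_of_nonneg ((norm_nonneg _).trans (hTL z))).le
    _ = L * ‖z‖ := by ring

theorem inner_self_apply_mem_Icc_of_norm_sub_half_smul_le
    (hTL : ∀ z, ‖T z - (L / 2) • z‖ ≤ L / 2 * ‖z‖) (z : E) :
    ⟪z, T z⟫ ∈ Set.Icc 0 (L * ‖z‖ ^ 2) := by
  have hsplit : ⟪z, T z⟫ = ⟪z, T z - (L / 2) • z⟫ + L / 2 * ‖z‖ ^ 2 := by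
    rw [inner_sub_right, real_inner_smul_right, real_inner_self_eq_norm_sq]; ring
  have hcs : |⟪z, T z - (L / 2) • z⟫| ≤ L / 2 * ‖z‖ ^ 2 :=
    calc |⟪z, T z - (L / 2) • z⟫| ≤ ‖z‖ * ‖T z - (L / 2) • z‖ := abs_real_inner_le_norm _ _
      _ ≤ ‖z‖ * (L / 2 * ‖z‖) := by gcongr; exact hTL z
      _ = L / 2 * ‖z‖ ^ 2 := by ring
  rw [abs_le] at hcs
  constructor <;> linarith

theorem norm_apply_sub_smul_le_of_norm_sub_half_smul_le
    (hTL : ∀ z, ‖T z - (L / 2) • z‖ ≤ L / 2 * ‖z‖) (hL : 0 ≤ L) {ρ c : ℝ} (hρ : 1 ≤ ρ)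
    (hc : c ∈ Set.Icc 0 (ρ * L)) (z : E) : ‖T z - c • z‖ ≤ ρ * L * ‖z‖ := by
  have hshift : |L / 2 - c| ≤ ρ * L - L / 2 := by
    rw [abs_le]; constructor <;> nlinarith [hc.1, hc.2]
  calc ‖T z - c • z‖ = ‖(T z - (L / 2) • z) + (L / 2 - c) • z‖ := by rw [sub_smul]; abel_nf
    _ ≤ ‖T z - (L / 2) • z‖ + |L / 2 - c| * ‖z‖ := by
      rw [← Real.norm_eq_abs, ← norm_smul]; exact norm_add_le _ _
    _ ≤ L / 2 * ‖z‖ + (ρ * L - L / 2) * ‖z‖ := by gcongr; exact hTL z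
    _ = ρ * L * ‖z‖ := by ring

theorem norm_inner_apply_smul_le (hTL : ∀ z, ‖T z - (L / 2) • z‖ ≤ L / 2 * ‖z‖) (a b c : E) :
    ‖⟪a, T b⟫ • c‖ ≤ L * ‖a‖ * ‖b‖ * ‖c‖ := by
  rw [norm_smul, Real.norm_eq_abs]
  calc |⟪a, T b⟫| * ‖c‖ ≤ ‖a‖ * (L * ‖b‖) * ‖c‖ := by
        gcongr
        exact (abs_real_inner_le_norm _ _).trans <|
          mul_le_mul_of_nonneg_left (norm_apply_le_of_norm_sub_half_smul_le hTL b) (norm_nonneg a)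
    _ = L * ‖a‖ * ‖b‖ * ‖c‖ := by ring

variable (T) in
noncomputable def sangerDir (y : ι → E) (s : Finset ι) (u : E) : E :=
  T u - ⟪u, T u⟫ • u - ∑ p ∈ s, ⟪y p, T u⟫ • y p

theorem sangerDir_sub_sangerDir (hT : T.IsSymmetric) (y : ι → E) (s : Finset ι) (x v : E) :
    sangerDir T y s x - sangerDir T y s v =
      (T (x - v) - ⟪x, T x⟫ • (x - v)) - ⟪x - v, T (x + v)⟫ • v
        - ∑ p ∈ s, ⟪y p, T (x - v)⟫ • y p := by
  have hxv : ⟪x, T v⟫ = ⟪v, T x⟫ := by rw [← hT, real_inner_comm]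
  simp only [sangerDir, map_sub, map_add, inner_sub_left, inner_add_right, inner_sub_right,
    hxv, sub_smul, smul_sub, Finset.sum_sub_distrib]
  module

theorem norm_sangerDir_sub_le (hT : T.IsSymmetric)
    (hTL : ∀ z, ‖T z - (L / 2) • z‖ ≤ L / 2 * ‖z‖) (hL : 0 ≤ L) {ρ : ℝ} (hρ : 1 ≤ ρ)
    {y : ι → E} {s : Finset ι} {x v : E} (hx : ‖x‖ ^ 2 ≤ ρ) (hv : ‖v‖ ^ 2 ≤ ρ)
    (hy : ∀ p ∈ s, ‖y p‖ ^ 2 ≤ ρ) :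
    ‖sangerDir T y s x - sangerDir T y s v‖ ≤ (3 + #s) * ρ * L * ‖x - v‖ := by
  rw [sangerDir_sub_sangerDir hT]
  set e := x - v
  have hquad := inner_self_apply_mem_Icc_of_norm_sub_half_smul_le hTL x
  have hmain : ‖T e - ⟪x, T x⟫ • e‖ ≤ ρ * L * ‖e‖ :=
    norm_apply_sub_smul_le_of_norm_sub_half_smul_le hTL hL hρ
      ⟨hquad.1, hquad.2.trans (by rw [mul_comm ρ]; gcongr)⟩ e
  have hcross : ‖⟪e, T (x + v)⟫ • v‖ ≤ 2 * ρ * L * ‖e‖ :=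
    calc _ ≤ L * ‖e‖ * ‖x + v‖ * ‖v‖ := norm_inner_apply_smul_le hTL _ _ _
      _ ≤ L * ‖e‖ * (‖x‖ + ‖v‖) * ‖v‖ := by gcongr; exact norm_add_le x v
      _ ≤ 2 * ρ * L * ‖e‖ := by
        have : (‖x‖ + ‖v‖) * ‖v‖ ≤ 2 * ρ := by nlinarith [sq_nonneg (‖x‖ - ‖v‖)]
        nlinarith [mul_nonneg hL (norm_nonneg e)]
  have hlower : ∀ p ∈ s, ‖⟪y p, T e⟫ • y p‖ ≤ ρ * L * ‖e‖ := fun p hp =>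
    calc _ ≤ L * ‖y p‖ * ‖e‖ * ‖y p‖ := norm_inner_apply_smul_le hTL _ _ _
      _ = ‖y p‖ ^ 2 * (L * ‖e‖) := by ring
      _ ≤ ρ * L * ‖e‖ := by rw [mul_assoc]; gcongr; exact hy p hp
  calc _ ≤ ‖T e - ⟪x, T x⟫ • e‖ + ‖⟪e, T (x + v)⟫ • v‖ + ‖∑ p ∈ s, ⟪y p, T e⟫ • y p‖ :=
        (norm_sub_le _ _).trans (add_le_add_left (norm_sub_le _ _) _)
    _ ≤ ρ * L * ‖e‖ + 2 * ρ * L * ‖e‖ + #s • (ρ * L * ‖e‖) := by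
        gcongr
        simpa using norm_sum_le_of_le s hlower
    _ = (3 + #s) * ρ * L * ‖e‖ := by rw [nsmul_eq_mul]; ring

end Sanger

theorem sangerAt_eq_sangerDir {d : ℕ} (A : Matrix (Fin d) (Fin d) ℝ)
    (y : ℕ → EuclideanSpace ℝ (Fin d)) (k : ℕ) (u : EuclideanSpace ℝ (Fin d)) :
    sangerAt A y k u = sangerDir (toEuclideanLin A) y (Icc 1 (k - 1)) u := by
  simp only [sangerAt, sangerDir, EuclideanSpace.inner_eq_star_dotProduct, ofLp_toLpLin,
    toLin'_apply, star_trivial, dotProduct_comm]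
  rfl

theorem DSA_average_perturbation_bound_general
    (M d K : ℕ) (hM : 0 < M) (hK1 : 1 ≤ K) (hKd : K < d)
    (β : ℝ)
    -- local and global covariance matrices
    (Cl : Fin M → Matrix (Fin d) (Fin d) ℝ) (hCl : ∀ i, (Cl i).PosSemidef)
    -- eigendecomposition of the global covariance matrix, indexed `1, …, d`
    (lam : ℕ → ℝ)
    (hnonneg : ∀ l, 1 ≤ l → l ≤ d → 0 ≤ lam l)
    -- the largest eigenvalue of each `C_i` is at most `λ₁`
    (hClLam : ∀ i μ, Module.End.HasEigenvalue (Matrix.toEuclideanLin (Cl i)) μ → μ ≤ lam 1)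
    (α : ℝ)
    -- the vectors held at the nodes at iteration `t`, and the network average
    (x : Fin M → ℕ → ℕ → EuclideanSpace ℝ (Fin d))
    (k : ℕ) (hk1 : 1 ≤ k) (t : ℕ)
    (xbar : EuclideanSpace ℝ (Fin d))
    (hxb : ∀ (i : Fin M) (p : ℕ), 1 ≤ p → p ≤ k → ‖x i p t‖ ^ 2 ≤ 3)
    (hxbarb : ‖xbar‖ ^ 2 ≤ 3)
    (bk : ℝ)
    (hdev : ∀ i : Fin M, ‖x i k t - xbar‖ ≤ bk * (β ^ t + α / (1 - β))) :
    ‖(M : ℝ)⁻¹ • ∑ i, (sangerAt (Cl i) (fun p => x i p t) k (x i k t)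
        - sangerAt (Cl i) (fun p => x i p t) k xbar)‖ ≤
      3 * ((k : ℝ) + 2) * lam 1 * bk * (β ^ t + α / (1 - β)) := by
  have hL : 0 ≤ lam 1 := hnonneg 1 le_rfl (by omega)
  have : Nonempty (Fin M) := Fin.pos_iff_nonempty.mp hM
  have hcard : ((Icc 1 (k - 1)).card : ℝ) = k - 1 := by
    rw [Nat.card_Icc, Nat.add_sub_cancel, Nat.cast_sub hk1, Nat.cast_one]
  have hnode : ∀ i, ‖sangerAt (Cl i) (fun p => x i p t) k (x i k t)
      - sangerAt (Cl i) (fun p => x i p t) k xbar‖ ≤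
        3 * ((k : ℝ) + 2) * lam 1 * bk * (β ^ t + α / (1 - β)) := fun i => by
    have hT := Matrix.isPositive_toEuclideanLin_iff.mpr (hCl i)
    rw [sangerAt_eq_sangerDir, sangerAt_eq_sangerDir]
    calc _ ≤ (3 + #(Icc 1 (k - 1))) * 3 * lam 1 * ‖x i k t - xbar‖ :=
          norm_sangerDir_sub_le hT.isSymmetric (hT.norm_apply_sub_half_smul_le hL (hClLam i))
            hL (by norm_num) (hxb i k hk1 le_rfl) hxbarb
            fun p hp => hxb i p (mem_Icc.mp hp).1 (by have := (mem_Icc.mp hp).2; omega)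
      _ ≤ 3 * ((k : ℝ) + 2) * lam 1 * (bk * (β ^ t + α / (1 - β))) := by
          rw [hcard, show (3 + ((k : ℝ) - 1)) * 3 = 3 * (k + 2) by ring]
          gcongr
          exact hdev i
      _ = _ := by ring
  simpa only [Fintype.card_fin] using norm_inv_card_smul_sum_le hnode

/-- Lemma 10 of the paper: the averaged perturbation
`h_k^{(t)} = (1/M) Σᵢ (H_i(x_{i,k}^{(t)}) − H_i(x̄_k^{(t)}))` satisfies
`‖h_k^{(t)}‖ ≤ 3(k+2) λ₁ b_k (β^t + α/(1−β))`. -/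
theorem DSA_average_perturbation_bound
    (M d K : ℕ) (hM : 0 < M) (hK1 : 1 ≤ K) (hKd : K < d)
    -- the symmetric doubly stochastic weight matrix
    (W : Matrix (Fin M) (Fin M) ℝ) (hWsymm : W.IsSymm)
    (hWnonneg : ∀ i j, 0 ≤ W i j) (hWrow : ∀ i, ∑ j, W i j = 1)
    (hWdiag : ∀ i, 0 < W i i)
    (β : ℝ) (hβ0 : 0 ≤ β) (hβ1 : β < 1)
    (hβ : ‖(Matrix.toEuclideanCLM (𝕜 := ℝ)
        (W - (M : ℝ)⁻¹ • Matrix.of (fun _ _ => (1:ℝ))) :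
      EuclideanSpace ℝ (Fin M) →L[ℝ] EuclideanSpace ℝ (Fin M))‖ = β)
    -- local and global covariance matrices
    (Cl : Fin M → Matrix (Fin d) (Fin d) ℝ) (hCl : ∀ i, (Cl i).PosSemidef)
    (C : Matrix (Fin d) (Fin d) ℝ) (hCsum : C = ∑ i, Cl i)
    -- eigendecomposition of the global covariance matrix, indexed `1, …, d`
    (lam : ℕ → ℝ) (q : ℕ → EuclideanSpace ℝ (Fin d))
    (horth : ∀ l l', 1 ≤ l → l ≤ d → 1 ≤ l' → l' ≤ d →
      (q l) ⬝ᵥ (q l' : Fin d → ℝ) = if l = l' then 1 else 0)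
    (heig : ∀ l, 1 ≤ l → l ≤ d → C.mulVec (q l) = lam l • (q l : Fin d → ℝ))
    (hstrict : ∀ l l', 1 ≤ l → l < l' → l' ≤ d → l ≤ K → lam l' < lam l)
    (hmono : ∀ l l', 1 ≤ l → l ≤ l' → l' ≤ d → lam l' ≤ lam l)
    (hnonneg : ∀ l, 1 ≤ l → l ≤ d → 0 ≤ lam l)
    (hKpos : 0 < lam K)
    -- the largest eigenvalue of each `C_i` is at most `λ₁`
    (hClLam : ∀ i μ, Module.End.HasEigenvalue (Matrix.toEuclideanLin (Cl i)) μ → μ ≤ lam 1)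
    (α : ℝ) (hα : 0 < α)
    -- the vectors held at the nodes at iteration `t`, and the network average
    (x : Fin M → ℕ → ℕ → EuclideanSpace ℝ (Fin d))
    (k : ℕ) (hk1 : 1 ≤ k) (hkK : k ≤ K) (t : ℕ)
    (xbar : EuclideanSpace ℝ (Fin d)) (hxbar : xbar = (M : ℝ)⁻¹ • ∑ i, x i k t)
    (hxb : ∀ (i : Fin M) (p : ℕ), 1 ≤ p → p ≤ k → ‖x i p t‖ ^ 2 ≤ 3)
    (hxbarb : ‖xbar‖ ^ 2 ≤ 3)
    (bk : ℝ) (hbk : 0 < bk)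
    (hdev : ∀ i : Fin M, ‖x i k t - xbar‖ ≤ bk * (β ^ t + α / (1 - β))) :
    ‖(M : ℝ)⁻¹ • ∑ i, (sangerAt (Cl i) (fun p => x i p t) k (x i k t)
        - sangerAt (Cl i) (fun p => x i p t) k xbar)‖ ≤
      3 * ((k : ℝ) + 2) * lam 1 * bk * (β ^ t + α / (1 - β)) :=
  DSA_average_perturbation_bound_general M d K hM hK1 hKd β Cl hCl lam hnonneg hClLam α x k hk1 t
    xbar hxb hxbarb bk hdev
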